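/- Let h ≥ 1, let X ⊆ B^h be nonempty, let G = Q_h(X), and let v ∈ ∩_{x∈\widehat X} I_G(0^h, x). Then the map β(u) = u ⊕ v, restricted to V(G), is a graph automorphism of G with β(v) = 0^h; in particular β is a proper embedding of G into Q_h, v is a minimal vertex of G, and the set of vertices mapped by β into \widehat X equals {x ⊕ v : x ∈ \widehat X}. -/

import Mathlib

open SimpleGraph

/-- The hypercube `Q_h` on binary words of length `h`: two words are adjacent
iff their Hamming distance is `1`. -/
def Qcube (h : ℕ) : SimpleGraph (Fin h → Bool) where
  Adj u v := hammingDist u v = 1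
  symm := ⟨fun u v huv => by show hammingDist v u = 1; rw [hammingDist_comm]; exact huv⟩
  loopless := ⟨fun u hu => by
    have hu' : hammingDist u u = 1 := hu
    rw [hammingDist_self] at hu'; exact absurd hu' (by norm_num)⟩

/-- Vertex set of the daisy cube `Q_h(X)`: all words below some element of `X`. -/
def daisyVerts {h : ℕ} (X : Set (Fin h → Bool)) : Set (Fin h → Bool) :=
  {v | ∃ x ∈ X, v ≤ x}

/-- The daisy cube `Q_h(X)`, the subgraph of `Q_h` induced by `daisyVerts X`. -/
def daisyGraph {h : ℕ} (X : Set (Fin h → Bool)) : SimpleGraph (daisyVerts X) :=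
  SimpleGraph.induce (daisyVerts X) (Qcube h)

/-- `\widehat X`: the set of maximal elements of the poset `(X, ≤)`. -/
def maxSet {h : ℕ} (X : Set (Fin h → Bool)) : Set (Fin h → Bool) :=
  {x ∈ X | ∀ y ∈ X, x ≤ y → x = y}

/-- The all-zeros word `0^h`. -/
def zeroW (h : ℕ) : Fin h → Bool := fun _ => false

/-- Bitwise XOR of words. -/
def xorW {h : ℕ} (u v : Fin h → Bool) : Fin h → Bool := fun i => xor (u i) (v i)

/-- Bitwise AND of words. -/
def andW {h : ℕ} (u v : Fin h → Bool) : Fin h → Bool := fun i => u i && v i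

/-- The weight `w(u)`: the number of ones of a word. -/
def weightW {h : ℕ} (u : Fin h → Bool) : ℕ :=
  (Finset.univ.filter fun i => u i = true).card

/-- The interval `I_G(u,v)`: vertices lying on shortest `u,v`-paths. -/
def gInterval {V : Type*} (G : SimpleGraph V) (u v : V) : Set V :=
  {w | G.dist u w + G.dist w v = G.dist u v}

/-- `N^u(v)`: neighbors of `v` that are closer to `u` than `v` is. -/
def lowerNbrs {V : Type*} (G : SimpleGraph V) (u v : V) : Set V :=
  {z | G.Adj v z ∧ G.dist u z + 1 = G.dist u v}

/-- `α` is an isometric embedding of `G` into `Q_h`. -/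
def IsIsomEmb {V : Type*} (G : SimpleGraph V) {h : ℕ} (α : V → Fin h → Bool) : Prop :=
  ∀ a b, hammingDist (α a) (α b) = G.dist a b

/-- `α` is a proper embedding of `G` into `Q_h`: an isometric embedding such that
`G` is isomorphic to the daisy cube generated by the image of `α`. -/
def IsProperEmb {V : Type*} (G : SimpleGraph V) {h : ℕ} (α : V → Fin h → Bool) : Prop :=
  IsIsomEmb G α ∧ Nonempty (G ≃g daisyGraph (Set.range α))

/-- `v` is a minimal vertex of `G`: some proper embedding sends `v` to `0^h`. -/
def IsMinVertex {V : Type*} (G : SimpleGraph V) (h : ℕ) (v : V) : Prop :=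
  ∃ α : V → Fin h → Bool, IsProperEmb G α ∧ α v = zeroW h

/-- The labeling conditions of Proposition `cubes`/Lemma `partial`: `α v = 0^h`,
the neighbors of `v` get pairwise distinct weight-one labels, and every other
vertex gets the bitwise OR of the labels of its down-neighbors. -/
def goodLabeling {V : Type*} (G : SimpleGraph V) {h : ℕ} (v : V)
    (α : V → Fin h → Bool) : Prop :=
  α v = zeroW h ∧
  Set.InjOn α (G.neighborSet v) ∧
  (∀ z ∈ G.neighborSet v, weightW (α z) = 1) ∧
  (∀ u ∉ insert v (G.neighborSet v),
    ∀ i, α u i = true ↔ ∃ z ∈ lowerNbrs G v u, α z i = true)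


section DaisyAux

variable {h : ℕ} {X : Set (Fin h → Bool)}

lemma hd_def (x y : Fin h → Bool) :
    hammingDist x y = (Finset.univ.filter fun i => x i ≠ y i).card := rfl

lemma dadj_iff (a b : daisyVerts X) :
    (daisyGraph X).Adj a b ↔ hammingDist (a : Fin h → Bool) b = 1 := Iff.rfl

lemma hd_xor (a b w : Fin h → Bool) :
    hammingDist (xorW a w) (xorW b w) = hammingDist a b := by
  rw [hd_def, hd_def]
  congr 1
  apply Finset.filter_congr
  intro i _
  simp only [xorW]
  cases a i <;> cases b i <;> cases w i <;> simp

lemma xor_le {a b c : Bool} (h1 : a ≤ c) (h2 : b ≤ c) : xor a b ≤ c := by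
  cases a <;> cases b <;> cases c <;> simp_all

lemma xor_invol (u w : Fin h → Bool) : xorW (xorW u w) w = u := by
  funext i; simp [xorW]

lemma daisy_mem_of_le {u w : Fin h → Bool} (hw : w ∈ daisyVerts X) (hu : u ≤ w) :
    u ∈ daisyVerts X := by
  obtain ⟨x, hx, hwx⟩ := hw
  exact ⟨x, hx, hu.trans hwx⟩

lemma hd_le_walk {a b : daisyVerts X} (p : (daisyGraph X).Walk a b) :
    hammingDist (a : Fin h → Bool) b ≤ p.length := by
  induction p with
  | nil => simp
  | @cons u c w hadj p ih =>
    have h1 : hammingDist (u : Fin h → Bool) c = 1 := hadj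
    calc hammingDist (u : Fin h → Bool) w
        ≤ hammingDist (u : Fin h → Bool) c + hammingDist (c : Fin h → Bool) w :=
          hammingDist_triangle _ _ _
      _ ≤ 1 + p.length := by rw [h1]; omega
      _ = (SimpleGraph.Walk.cons hadj p).length := by
          rw [SimpleGraph.Walk.length_cons]; omega

lemma exists_walk_hd : ∀ n (a b : daisyVerts X),
    hammingDist (a : Fin h → Bool) b = n →
    ∃ p : (daisyGraph X).Walk a b, p.length = n := by
  intro n
  induction n with
  | zero =>
    intro a b hab
    have : a = b := Subtype.ext (eq_of_hammingDist_eq_zero hab)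
    subst this
    exact ⟨SimpleGraph.Walk.nil, rfl⟩
  | succ n ih =>
    intro a b hab
    have key : ∃ i, (a : Fin h → Bool) i ≠ (b : Fin h → Bool) i ∧
        Function.update (a : Fin h → Bool) i ((b : Fin h → Bool) i) ∈ daisyVerts X := by
      by_cases hc : ∃ i, (a : Fin h → Bool) i = true ∧ (b : Fin h → Bool) i = false
      · obtain ⟨i, hai, hbi⟩ := hc
        refine ⟨i, by rw [hai, hbi]; simp, daisy_mem_of_le a.2 ?_⟩
        intro j
        by_cases hj : j = i
        · subst hj; rw [Function.update_self, hbi]; exact Bool.false_le _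
        · rw [Function.update_of_ne hj]
      · push_neg at hc
        have hab' : (a : Fin h → Bool) ≤ (b : Fin h → Bool) := by
          intro j
          rw [Bool.le_iff_imp]
          intro haj
          by_contra hbj
          exact hc j haj (Bool.eq_false_iff.2 hbj)
        have hne : ∃ i, (a : Fin h → Bool) i ≠ (b : Fin h → Bool) i := by
          by_contra hno
          push_neg at hno
          have : hammingDist (a : Fin h → Bool) b = 0 :=
            hammingDist_eq_zero.2 (funext hno)
          omega
        obtain ⟨i, hi⟩ := hne
        refine ⟨i, hi, daisy_mem_of_le b.2 ?_⟩
        intro j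
        by_cases hj : j = i
        · subst hj; rw [Function.update_self]
        · rw [Function.update_of_ne hj]; exact hab' j
    obtain ⟨i, hi, hmem⟩ := key
    set a' : daisyVerts X :=
      ⟨Function.update (a : Fin h → Bool) i ((b : Fin h → Bool) i), hmem⟩ with ha'
    have hadj : (daisyGraph X).Adj a a' := by
      rw [dadj_iff]
      show hammingDist _ (Function.update (a : Fin h → Bool) i ((b : Fin h → Bool) i)) = 1
      rw [hd_def]
      have : (Finset.univ.filter fun j => (a : Fin h → Bool) j ≠
          Function.update (a : Fin h → Bool) i ((b : Fin h → Bool) i) j) = {i} := by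
        ext j
        simp only [Finset.mem_filter, Finset.mem_univ, true_and, Finset.mem_singleton]
        by_cases hj : j = i
        · subst hj; rw [Function.update_self]; simpa using hi
        · rw [Function.update_of_ne hj]; simp [hj]
      rw [this, Finset.card_singleton]
    have hd' : hammingDist (a' : Fin h → Bool) b = n := by
      have hset : (Finset.univ.filter fun j =>
          Function.update (a : Fin h → Bool) i ((b : Fin h → Bool) i) j ≠
            (b : Fin h → Bool) j)
          = (Finset.univ.filter fun j =>
              (a : Fin h → Bool) j ≠ (b : Fin h → Bool) j).erase i := by
        ext j
        simp only [Finset.mem_filter, Finset.mem_univ, true_and, Finset.mem_erase]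
        by_cases hj : j = i
        · subst hj; rw [Function.update_self]; simp
        · rw [Function.update_of_ne hj]; simp [hj]
      show hammingDist (Function.update (a : Fin h → Bool) i ((b : Fin h → Bool) i)) _ = n
      rw [hd_def, hset, Finset.card_erase_of_mem (by simp [hi]), ← hd_def, hab]
      omega
    obtain ⟨p, hp⟩ := ih a' b hd'
    exact ⟨SimpleGraph.Walk.cons hadj p, by rw [SimpleGraph.Walk.length_cons, hp]⟩

lemma daisy_dist (a b : daisyVerts X) :
    (daisyGraph X).dist a b = hammingDist (a : Fin h → Bool) b := by
  obtain ⟨p, hp⟩ := exists_walk_hd _ a b rfl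
  refine le_antisymm (hp ▸ SimpleGraph.dist_le p) ?_
  obtain ⟨q, hq⟩ := p.reachable.exists_walk_length_eq_dist
  rw [← hq]
  exact hd_le_walk q

lemma hd_zero (x : Fin h → Bool) : hammingDist (zeroW h) x = weightW x := by
  rw [hd_def, weightW]
  congr 1
  apply Finset.filter_congr
  intro i _
  simp only [zeroW]
  cases x i <;> simp

lemma le_of_weight_eq {u x : Fin h → Bool}
    (hw : weightW u + hammingDist u x = weightW x) : u ≤ x := by
  have hsum : ∑ i, ((if u i = true then 1 else 0) + (if u i ≠ x i then 1 else 0) : ℕ)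
      = ∑ i, (if x i = true then 1 else 0 : ℕ) := by
    rw [Finset.sum_add_distrib, ← Finset.card_filter, ← Finset.card_filter,
      ← Finset.card_filter]
    exact hw
  have hle : ∀ i ∈ Finset.univ, (if x i = true then (1:ℕ) else 0)
      ≤ (if u i = true then 1 else 0) + (if u i ≠ x i then 1 else 0) := by
    intro i _
    cases hu : u i <;> cases hx : x i <;> simp
  have heq := (Finset.sum_eq_sum_iff_of_le hle).1 hsum.symm
  intro i
  have hi := heq i (Finset.mem_univ i)
  cases hu : u i <;> cases hx : x i <;> simp_all

lemma exists_max_above {u : Fin h → Bool} (hu : u ∈ daisyVerts X) :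
    ∃ m ∈ maxSet X, u ≤ m := by
  obtain ⟨x, hxX, hux⟩ := hu
  obtain ⟨m, hm, hmax⟩ := Set.Finite.exists_maximalFor id {y ∈ X | x ≤ y}
    (Set.toFinite _) ⟨x, hxX, le_rfl⟩
  exact ⟨m, ⟨hm.1, fun y hy hmy => le_antisymm hmy (hmax ⟨hy, hm.2.trans hmy⟩ hmy)⟩, hux.trans hm.2⟩

end DaisyAux

/-- If `v` lies in all intervals `I_G(0^h, x)` for maximal `x`, then
`β(u) = u ⊕ v` restricted to `V(G)` is a graph automorphism of the daisy cube `G`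
with `β(v) = 0^h`; in particular `β` is a proper embedding of `G`, `v` is a minimal
vertex of `G`, and the set of vertices mapped by `β` into `\widehat X` equals
`{x ⊕ v : x ∈ \widehat X}`. -/
theorem stmt_2 (h : ℕ) (hh : 1 ≤ h) (X : Set (Fin h → Bool)) (hX : X.Nonempty)
    (z : daisyVerts X) (hz : (z : Fin h → Bool) = zeroW h)
    (v : daisyVerts X)
    (hv : ∀ x : daisyVerts X, (x : Fin h → Bool) ∈ maxSet X →
      v ∈ gInterval (daisyGraph X) z x) :
    Set.BijOn (fun u => xorW u (v : Fin h → Bool)) (daisyVerts X) (daisyVerts X) ∧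
    (∀ a b : daisyVerts X, (daisyGraph X).Adj a b ↔
      (Qcube h).Adj (xorW (a : Fin h → Bool) (v : Fin h → Bool))
        (xorW (b : Fin h → Bool) (v : Fin h → Bool))) ∧
    IsProperEmb (daisyGraph X)
      (fun u : daisyVerts X => xorW (u : Fin h → Bool) (v : Fin h → Bool)) ∧
    xorW (v : Fin h → Bool) (v : Fin h → Bool) = zeroW h ∧
    IsMinVertex (daisyGraph X) h v ∧
    {u : Fin h → Bool | u ∈ daisyVerts X ∧ xorW u (v : Fin h → Bool) ∈ maxSet X}
      = (fun x => xorW x (v : Fin h → Bool)) '' maxSet X := by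
  -- `v` is below every maximal element
  have hvle : ∀ x ∈ maxSet X, (v : Fin h → Bool) ≤ x := by
    intro x hx
    have hxd : x ∈ daisyVerts X := ⟨x, hx.1, le_rfl⟩
    have hint := hv ⟨x, hxd⟩ hx
    simp only [gInterval, Set.mem_setOf_eq] at hint
    rw [daisy_dist, daisy_dist, daisy_dist] at hint
    simp only [hz] at hint
    rw [hd_zero, hd_zero] at hint
    exact le_of_weight_eq hint
  -- the xor map preserves daisyVerts
  have hmemx : ∀ u ∈ daisyVerts X, xorW u (v : Fin h → Bool) ∈ daisyVerts X := by
    intro u hu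
    obtain ⟨m, hm, hum⟩ := exists_max_above hu
    have hvm := hvle m hm
    refine ⟨m, hm.1, fun i => ?_⟩
    have h1 := hum i
    have h2 := hvm i
    exact xor_le h1 h2
  have hbij : Set.BijOn (fun u => xorW u (v : Fin h → Bool)) (daisyVerts X) (daisyVerts X) := by
    refine ⟨fun u hu => hmemx u hu, ?_, ?_⟩
    · intro a _ b _ hab
      have := congrArg (fun w => xorW w (v : Fin h → Bool)) hab
      simpa only [xor_invol] using this
    · intro u hu
      exact ⟨xorW u (v : Fin h → Bool), hmemx u hu, xor_invol u (v : Fin h → Bool)⟩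
  refine ⟨hbij, ?_, ?_, ?_, ?_, ?_⟩
  · intro a b
    rw [dadj_iff]
    show _ ↔ hammingDist (xorW (a : Fin h → Bool) _) (xorW (b : Fin h → Bool) _) = 1
    rw [hd_xor]
  · -- proper embedding
    constructor
    · intro a b
      rw [daisy_dist, hd_xor]
    · set α : daisyVerts X → Fin h → Bool :=
        fun u : daisyVerts X => xorW (u : Fin h → Bool) (v : Fin h → Bool) with hα
      have hrange : Set.range α = daisyVerts X := by
        ext w
        constructor
        · rintro ⟨u, rfl⟩; exact hmemx ↑u u.2
        · intro hw; exact ⟨⟨xorW w ↑v, hmemx w hw⟩, xor_invol w ↑v⟩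
      have hdd : daisyVerts (daisyVerts X) = daisyVerts X := by
        ext w
        constructor
        · rintro ⟨x, ⟨y, hy, hxy⟩, hwx⟩
          exact ⟨y, hy, hwx.trans hxy⟩
        · intro hw
          exact ⟨w, hw, le_rfl⟩
      have hsets : daisyVerts X = daisyVerts (Set.range α) := by rw [hrange, hdd]
      exact ⟨⟨Equiv.setCongr hsets, fun {a b} => Iff.rfl⟩⟩
  · funext i; simp [xorW, zeroW]
  · refine ⟨fun u : daisyVerts X => xorW (u : Fin h → Bool) (v : Fin h → Bool), ?_, ?_⟩
    · constructor
      · intro a b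
        rw [daisy_dist, hd_xor]
      · set α : daisyVerts X → Fin h → Bool :=
          fun u : daisyVerts X => xorW (u : Fin h → Bool) (v : Fin h → Bool) with hα
        have hrange : Set.range α = daisyVerts X := by
          ext w
          constructor
          · rintro ⟨u, rfl⟩; exact hmemx ↑u u.2
          · intro hw; exact ⟨⟨xorW w ↑v, hmemx w hw⟩, xor_invol w ↑v⟩
        have hdd : daisyVerts (daisyVerts X) = daisyVerts X := by
          ext w
          constructor
          · rintro ⟨x, ⟨y, hy, hxy⟩, hwx⟩
            exact ⟨y, hy, hwx.trans hxy⟩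
          · intro hw
            exact ⟨w, hw, le_rfl⟩
        have hsets : daisyVerts X = daisyVerts (Set.range α) := by rw [hrange, hdd]
        exact ⟨⟨Equiv.setCongr hsets, fun {a b} => Iff.rfl⟩⟩
    · funext i; simp [xorW, zeroW]
  · ext u
    simp only [Set.mem_setOf_eq, Set.mem_image]
    constructor
    · rintro ⟨hu, hmax⟩
      exact ⟨xorW u (v : Fin h → Bool), hmax, xor_invol u (v : Fin h → Bool)⟩
    · rintro ⟨x, hx, rfl⟩
      refine ⟨?_, by rw [xor_invol]; exact hx⟩
      refine ⟨x, hx.1, fun i => ?_⟩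
      exact xor_le le_rfl (hvle x hx i)
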